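/- Let E'/E be a finite extension of fields of characteristic zero, σ' a ring automorphism of E' with σ'∘σ' = id which maps E to itself and restricts to a nontrivial automorphism σ of E. Let α ∈ E' satisfy σ'(α) = α and E' = E[α] (α generates E' as an E-algebra). Let V' be a finite-dimensional E'-vector space. Then the map Φ' ↦ Tr_{E'/E} ∘ Φ' is a bijection from the set of nondegenerate σ'-hermitian forms on the E'-vector space V' onto the set of nondegenerate σ-hermitian forms Ψ on V', regarded as an E-vector space, that satisfy Ψ(α·x, y) = Ψ(x, α·y) for all x, y ∈ V'. -/

import Mathlib

/-!
Tracing down is compatible with all the structure: the trace commutes with the involutions, and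
the nondegeneracy of the trace form makes `Φ ↦ Tr ∘ Φ` injective on forms that are `E'`-linear in
the second variable. Conversely, since `α` generates `E'` and is fixed by `σ'`, a σ-hermitian `Ψ`
with `Ψ (α x, y) = Ψ (x, α y)` satisfies `Ψ (b x, y) = Ψ (x, σ'(b) y)` for every `b ∈ E'`; this is
exactly what makes the form `Φ`, defined through the trace form by `Tr (Φ (x, y) a) = Ψ (x, a y)`,
σ'-hermitian.
-/

/-- A `σ`-hermitian form on a vector space `V` over a field `K`: additive in each variable,
`σ`-semilinear in the first, linear in the second, with `Φ (y, x) = σ (Φ (x, y))`. -/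
def IsHermitianForm {K V : Type*} [Field K] [AddCommGroup V] [Module K V]
    (σ : K → K) (Φ : V → V → K) : Prop :=
  (∀ x x' y, Φ (x + x') y = Φ x y + Φ x' y) ∧
  (∀ x y y', Φ x (y + y') = Φ x y + Φ x y') ∧
  (∀ (a : K) (x y : V), Φ (a • x) y = σ a * Φ x y) ∧
  (∀ (a : K) (x y : V), Φ x (a • y) = a * Φ x y) ∧
  (∀ x y, Φ y x = σ (Φ x y))

namespace Algebra

variable {K L : Type*} [Field K] [Field L] [Algebra K L]

theorem trace_apply_ringEquiv {σ : K ≃+* K} {τ : L ≃+* L}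
    (hres : ∀ x, τ (algebraMap K L x) = algebraMap K L (σ x)) (z : L) :
    trace K L (τ z) = σ (trace K L z) := by
  have he : (algebraMap K L).comp (σ : K →+* K) = (τ : L →+* L).comp (algebraMap K L) := by
    ext a
    exact (hres a).symm
  rw [trace_eq_of_equiv_equiv σ τ he z, RingEquiv.apply_symm_apply]

theorem trace_algebraMap_mul (a : K) (z : L) :
    trace K L (algebraMap K L a * z) = a * trace K L z := by
  rw [← smul_def, map_smul, smul_eq_mul]

variable [FiniteDimensional K L] [Algebra.IsSeparable K L]

theorem eq_zero_of_forall_trace_mul_eq_zero {c : L} (h : ∀ a, trace K L (c * a) = 0) : c = 0 :=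
  (traceForm_nondegenerate K L).1 c fun a => h a

theorem eq_of_forall_trace_mul_eq {c d : L} (h : ∀ a, trace K L (c * a) = trace K L (d * a)) :
    c = d :=
  sub_eq_zero.mp <| eq_zero_of_forall_trace_mul_eq_zero (K := K) fun a => by
    rw [sub_mul, map_sub, h, sub_self]

theorem exists_forall_trace_mul_eq (f : L →ₗ[K] K) : ∃ c : L, ∀ a, trace K L (c * a) = f a :=
  ⟨((traceForm K L).toDual (traceForm_nondegenerate K L)).symm f,
    fun a => LinearMap.BilinForm.apply_toDual_symm_apply (hB := traceForm_nondegenerate K L) f a⟩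

end Algebra

open Algebra

section TraceComp

variable {K L V : Type*} [Field K] [Field L] [Algebra K L] [AddCommGroup V] [Module L V]
  {σ : K ≃+* K} {τ : L ≃+* L}

theorem IsHermitianForm.trace_comp_smul_left {Φ : V → V → L} (hΦ : IsHermitianForm τ Φ)
    (b : L) (x y : V) : trace K L (Φ (b • x) y) = trace K L (Φ x (τ b • y)) := by
  rw [hΦ.2.2.1, hΦ.2.2.2.1]

variable [Module K V] [IsScalarTower K L V]

theorem IsHermitianForm.trace_comp {Φ : V → V → L} (hΦ : IsHermitianForm τ Φ)
    (hres : ∀ x, τ (algebraMap K L x) = algebraMap K L (σ x)) :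
    IsHermitianForm σ fun x y => trace K L (Φ x y) := by
  obtain ⟨hadd_left, hadd_right, hsmul_left, hsmul_right, hsymm⟩ := hΦ
  refine ⟨fun x x' y => ?_, fun x y y' => ?_, fun a x y => ?_, fun a x y => ?_, fun x y => ?_⟩
  · simp only [hadd_left, map_add]
  · simp only [hadd_right, map_add]
  · simp only [← algebraMap_smul L a x, hsmul_left, hres, trace_algebraMap_mul]
  · simp only [← algebraMap_smul L a y, hsmul_right, trace_algebraMap_mul]
  · dsimp only
    rw [hsymm, trace_apply_ringEquiv hres]

/-- The set of `b` with `Ψ (b • x) y = Ψ x (τ b • y)` is a subalgebra. -/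
theorem IsHermitianForm.smul_left_eq_of_adjoin_eq_top {Ψ : V → V → K} (hΨ : IsHermitianForm σ Ψ)
    (hres : ∀ x, τ (algebraMap K L x) = algebraMap K L (σ x))
    {α : L} (hgen : adjoin K ({α} : Set L) = ⊤) (hα : ∀ x y, Ψ (α • x) y = Ψ x (τ α • y))
    (b : L) (x y : V) : Ψ (b • x) y = Ψ x (τ b • y) := by
  obtain ⟨hadd_left, hadd_right, hsmul_left, hsmul_right, -⟩ := hΨ
  have hb : b ∈ adjoin K ({α} : Set L) := hgen ▸ mem_top
  induction hb using adjoin_induction generalizing x y with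
  | mem c hc => exact (Set.mem_singleton_iff.mp hc) ▸ hα x y
  | algebraMap r => rw [hres, algebraMap_smul, algebraMap_smul, hsmul_left, hsmul_right]
  | add b c _ _ hb hc => rw [add_smul, hadd_left, map_add, add_smul, hadd_right, hb, hc]
  | mul b c _ _ hb hc => rw [mul_smul, hb, hc, ← mul_smul, mul_comm, ← map_mul]

end TraceComp

section TraceLift

variable {K L V : Type*} [Field K] [Field L] [Algebra K L] [FiniteDimensional K L]
  [Algebra.IsSeparable K L] [AddCommGroup V] [Module L V]

theorem nondegenerate_trace_comp {Φ : V → V → L}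
    (hsmul_right : ∀ (a : L) x y, Φ x (a • y) = a * Φ x y)
    (hΦ : ∀ x, (∀ y, Φ x y = 0) → x = 0) (x : V) (hx : ∀ y, trace K L (Φ x y) = 0) : x = 0 :=
  hΦ x fun y => eq_zero_of_forall_trace_mul_eq_zero fun a => by
    rw [mul_comm, ← hsmul_right]
    exact hx _

theorem eq_of_trace_comp_eq {Φ₁ Φ₂ : V → V → L}
    (h₁ : ∀ (a : L) x y, Φ₁ x (a • y) = a * Φ₁ x y)
    (h₂ : ∀ (a : L) x y, Φ₂ x (a • y) = a * Φ₂ x y)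
    (h : (fun x y => trace K L (Φ₁ x y)) = fun x y => trace K L (Φ₂ x y)) : Φ₁ = Φ₂ := by
  funext x y
  refine eq_of_forall_trace_mul_eq (K := K) fun a => ?_
  simpa only [h₁, h₂, mul_comm a] using congrFun (congrFun h x) (a • y)

variable [Module K V] {σ : K ≃+* K} {τ : L ≃+* L}

theorem isHermitianForm_of_forall_trace_mul_eq {Φ : V → V → L} {Ψ : V → V → K}
    (hΨ : IsHermitianForm σ Ψ) (hτ : ∀ z, τ (τ z) = z)
    (hres : ∀ x, τ (algebraMap K L x) = algebraMap K L (σ x))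
    (hΨτ : ∀ (b : L) x y, Ψ (b • x) y = Ψ x (τ b • y))
    (hΦ : ∀ x y a, trace K L (Φ x y * a) = Ψ x (a • y)) : IsHermitianForm τ Φ := by
  obtain ⟨hadd_left, hadd_right, -, -, hsymm⟩ := hΨ
  refine ⟨fun x x' y => ?_, fun x y y' => ?_, fun b x y => ?_, fun b x y => ?_, fun x y => ?_⟩
    <;> refine eq_of_forall_trace_mul_eq (K := K) fun a => ?_
  · rw [hΦ, hadd_left, add_mul, map_add, hΦ, hΦ]
  · rw [hΦ, smul_add, hadd_right, add_mul, map_add, hΦ, hΦ]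
  · rw [hΦ, hΨτ, ← mul_smul, ← hΦ, mul_left_comm, mul_assoc]
  · rw [hΦ, smul_smul, ← hΦ, mul_comm a, mul_left_comm, mul_assoc]
  · have : τ (Φ x y) * a = τ (Φ x y * τ a) := by rw [map_mul, hτ]
    rw [hΦ, this, trace_apply_ringEquiv hres, hΦ, ← hΨτ, hsymm]

variable [IsScalarTower K L V]

theorem exists_forall_trace_mul_eq_smul_right {Ψ : V → V → K}
    (hadd_right : ∀ x y y', Ψ x (y + y') = Ψ x y + Ψ x y')
    (hsmul_right : ∀ (a : K) x y, Ψ x (a • y) = a * Ψ x y) :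
    ∃ Φ : V → V → L, ∀ x y a, trace K L (Φ x y * a) = Ψ x (a • y) := by
  choose Φ hΦ using fun x y => exists_forall_trace_mul_eq
    { toFun := fun a : L => Ψ x (a • y)
      map_add' := fun a b => by simp only [add_smul, hadd_right]
      map_smul' := fun c a => by simp only [smul_assoc, hsmul_right, RingHom.id_apply, smul_eq_mul] }
  exact ⟨Φ, fun x y => hΦ x y⟩

end TraceLift

theorem stmt_14_general (E E' : Type*) [Field E] [Field E'] [CharZero E] [Algebra E E']
    [FiniteDimensional E E']
    (σ' : E' ≃+* E') (hσ' : ∀ x, σ' (σ' x) = x)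
    (σ : E ≃+* E) (hres : ∀ x : E, σ' (algebraMap E E' x) = algebraMap E E' (σ x))
    (α : E') (hα : σ' α = α) (hgen : Algebra.adjoin E ({α} : Set E') = ⊤)
    (V' : Type*) [AddCommGroup V'] [Module E' V'] [Module E V'] [IsScalarTower E E' V'] :
    Set.BijOn (fun (Φ : V' → V' → E') (x y : V') => Algebra.trace E E' (Φ x y))
      {Φ : V' → V' → E' | IsHermitianForm (⇑σ') Φ ∧ ∀ x, (∀ y, Φ x y = 0) → x = 0}
      {Ψ : V' → V' → E | IsHermitianForm (⇑σ) Ψ ∧ (∀ x, (∀ y, Ψ x y = 0) → x = 0) ∧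
        ∀ x y : V', Ψ (α • x) y = Ψ x (α • y)} := by
  refine ⟨?mapsTo, ?injOn, ?surjOn⟩
  case mapsTo =>
    rintro Φ ⟨hΦ, hnd⟩
    exact ⟨hΦ.trace_comp hres, nondegenerate_trace_comp hΦ.2.2.2.1 hnd,
      fun x y => by simp only [hΦ.trace_comp_smul_left, hα]⟩
  case injOn =>
    rintro Φ₁ ⟨hΦ₁, -⟩ Φ₂ ⟨hΦ₂, -⟩ h
    exact eq_of_trace_comp_eq hΦ₁.2.2.2.1 hΦ₂.2.2.2.1 h
  case surjOn =>
    rintro Ψ ⟨hΨ, hnd, hΨα⟩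
    have hΨσ' := hΨ.smul_left_eq_of_adjoin_eq_top hres hgen (by rwa [hα])
    obtain ⟨Φ, hΦ⟩ := exists_forall_trace_mul_eq_smul_right (L := E') hΨ.2.1 hΨ.2.2.2.1
    have htrace : (fun x y => trace E E' (Φ x y)) = Ψ := by
      funext x y
      simpa using hΦ x y 1
    refine ⟨Φ, ⟨isHermitianForm_of_forall_trace_mul_eq hΨ hσ' hres hΨσ' hΦ, fun x hx => ?_⟩, htrace⟩
    exact hnd x fun y => by simp only [← htrace, hx y, map_zero]

/-- Let `E'/E` be a finite extension, `σ'` an involution of `E'`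
restricting to a nontrivial involution `σ` of `E`, and `α ∈ E'` fixed by `σ'` and
generating `E'` over `E`. Then `Φ' ↦ Tr_{E'/E} ∘ Φ'` is a bijection from the set of
nondegenerate `σ'`-hermitian forms on an `E'`-vector space `V'` onto the set of
nondegenerate `σ`-hermitian forms `Ψ` on `V'` viewed over `E` satisfying
`Ψ (α • x, y) = Ψ (x, α • y)`. -/
theorem stmt_14 (E E' : Type*) [Field E] [Field E'] [CharZero E] [Algebra E E']
    [FiniteDimensional E E']
    (σ' : E' ≃+* E') (hσ' : ∀ x, σ' (σ' x) = x)
    (σ : E ≃+* E) (hres : ∀ x : E, σ' (algebraMap E E' x) = algebraMap E E' (σ x))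
    (hnt : σ ≠ RingEquiv.refl E)
    (α : E') (hα : σ' α = α) (hgen : Algebra.adjoin E ({α} : Set E') = ⊤)
    (V' : Type*) [AddCommGroup V'] [Module E' V'] [Module E V'] [IsScalarTower E E' V']
    [FiniteDimensional E' V'] :
    Set.BijOn (fun (Φ : V' → V' → E') (x y : V') => Algebra.trace E E' (Φ x y))
      {Φ : V' → V' → E' | IsHermitianForm (⇑σ') Φ ∧ ∀ x, (∀ y, Φ x y = 0) → x = 0}
      {Ψ : V' → V' → E | IsHermitianForm (⇑σ) Ψ ∧ (∀ x, (∀ y, Ψ x y = 0) → x = 0) ∧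
        ∀ x y : V', Ψ (α • x) y = Ψ x (α • y)} :=
  stmt_14_general E E' σ' hσ' σ hres α hα hgen V'
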